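/- Let g(s) = q^{(τ+1)s − τ − 1/2}. Then on V₋ the operator identity W̄₀ ∘ T_{−τ/(τ+1)} = (M_g ∘ T_{−τ/(τ+1)} − T_{1/(τ+1)}) ∘ W̄₀ holds, i.e. the initial value −L̄₀^{−1/(τ^{−1}+1)} = −W̄₀ ∘ T_{−τ/(τ+1)} ∘ W̄₀^{−1} equals (1 − q^{(τ+1)s − τ − 1/2} Λ^{−1}) Λ^{1/(τ+1)} (note −1/(τ^{−1}+1) = −τ/(τ+1)). -/

import Mathlib

/-!
Write `W̄₀ f (s) = ∑ₙ w(s, n) f(s + n)` with `w(s, n) = c_n q^{E(s, n)}`. Since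
`s + 1/(τ+1) = s - τ/(τ+1) + 1`, both sides are sums against `f(s - τ/(τ+1) + n)`, and comparing
coefficients leaves `w(s, 0) = g(s) w(s - τ/(τ+1), 0)` and
`w(s, n+1) = g(s) w(s - τ/(τ+1), n+1) - w(s + 1/(τ+1), n)`. The quadratic exponents
recombine so that `g(s) q^{E(s - τ/(τ+1), n)} = q^{E(s, n) - n}` and
`q^{E(s + 1/(τ+1), n)} = q^{E(s, n+1) + 1/2 - (n+1)}`, which turns the second relation into the
recursion `c_{n+1} (1 - q^{n+1}) = c_n q^{1/2}`, i.e. the functional equation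
`F(x) = (1 - q^{1/2} x)⁻¹ F(q x)` of `F(x) = ∏ (1 - q^{i-1/2} x)⁻¹`.
-/

/-- `c_0 = 1`, `c_n = q^{n/2} / ∏_{k=1}^n (1 − q^k)`, the coefficients of
`∏_{i=1}^∞ (1 − q^{i−1/2} x)^{−1} = Σ_{n≥0} c_n x^n`. -/
noncomputable def ccoef (q : ℝ) (n : ℕ) : ℝ :=
  q ^ ((n : ℝ) / 2) / ∏ k ∈ Finset.range n, (1 - q ^ (k + 1))

/-- The dressing operator
`(W̄₀ f)(s) = q^{(τ+1)(s−1/2)²/2} Σ_{n≥0} c_n q^{(τ⁻¹+1)(s+n−1/2)²/2} f(s + n)`,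
realizing `q^{(τ+1)(s−1/2)²/2} ∏_{i=1}^∞ (1 − q^{i−1/2} Λ)^{−1} q^{(τ⁻¹+1)(s−1/2)²/2}`;
on functions whose support is bounded above the sum has finitely many
nonzero terms. -/
noncomputable def Wb0 (q τ : ℝ) (f : ℝ → ℂ) : ℝ → ℂ := fun s =>
  ((q ^ ((τ + 1) * (s - 1/2) ^ 2 / 2) : ℝ) : ℂ) *
    ∑ᶠ n : ℕ,
      ((ccoef q n : ℝ) : ℂ) *
        ((q ^ ((τ⁻¹ + 1) * (s + (n : ℝ) - 1/2) ^ 2 / 2) : ℝ) : ℂ) *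
        f (s + (n : ℝ))

open Function

theorem finsum_nat_eq_zero_add_finsum_succ {M : Type*} [AddCommMonoid M] {φ : ℕ → M}
    (hφ : φ.HasFiniteSupport) : ∑ᶠ n, φ n = φ 0 + ∑ᶠ n, φ (n + 1) := by
  obtain ⟨N, hN⟩ := hφ.bddAbove
  have hsupp : support φ ⊆ Finset.range (N + 1) := fun n hn =>
    Finset.mem_range.2 (Nat.lt_succ_of_le (hN hn))
  have hsupp_succ : support (fun n => φ (n + 1)) ⊆ Finset.range N := fun n hn =>
    Finset.mem_range.2 (hN hn)
  rw [finsum_eq_sum_of_support_subset _ hsupp, finsum_eq_sum_of_support_subset _ hsupp_succ,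
    Finset.sum_range_succ', add_comm]

theorem finsum_nat_eq_sub_of_succ {G : Type*} [AddCommGroup G] {φ ψ χ : ℕ → G}
    (hφ : φ.HasFiniteSupport) (hψ : ψ.HasFiniteSupport) (h0 : χ 0 = φ 0)
    (hsucc : ∀ n, χ (n + 1) = φ (n + 1) - ψ n) : ∑ᶠ n, χ n = ∑ᶠ n, φ n - ∑ᶠ n, ψ n := by
  have hφ_succ : (fun n => φ (n + 1)).HasFiniteSupport :=
    hφ.fun_comp_of_injective (add_left_injective 1)
  have hχ : χ.HasFiniteSupport := by
    refine (((hφ_succ.sub hψ).image (· + 1)).insert 0).subset fun n hn => ?_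
    cases n with
    | zero => exact Set.mem_insert 0 _
    | succ n => exact Or.inr ⟨n, by simpa [← hsucc] using hn, rfl⟩
  rw [finsum_nat_eq_zero_add_finsum_succ hχ, finsum_nat_eq_zero_add_finsum_succ hφ, h0,
    finsum_congr hsucc, finsum_sub_distrib hφ_succ hψ, add_sub_assoc]

theorem BddAbove.hasFiniteSupport_comp_add_natCast {M : Type*} [Zero M] {f : ℝ → M}
    (hf : BddAbove (support f)) (s : ℝ) : (fun n : ℕ => f (s + n)).HasFiniteSupport := by
  obtain ⟨B, hB⟩ := hf
  refine (Set.finite_Iic ⌈B - s⌉₊).subset fun n hn => ?_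
  have : s + n ≤ B := hB hn
  exact Nat.cast_le.mp ((show (n : ℝ) ≤ B - s by linarith).trans (Nat.le_ceil _))

theorem ccoef_succ_mul {q : ℝ} (hq0 : 0 < q) (hq1 : q ≠ 1) (n : ℕ) :
    ccoef q (n + 1) * (1 - q ^ (n + 1)) = ccoef q n * q ^ (1 / 2 : ℝ) := by
  have hfactor : ∀ k : ℕ, 1 - q ^ (k + 1) ≠ 0 := fun k =>
    sub_ne_zero.2 fun h => hq1 ((pow_eq_one_iff_of_nonneg hq0.le k.succ_ne_zero).1 h.symm)
  have hprod : ∏ k ∈ Finset.range n, (1 - q ^ (k + 1)) ≠ 0 :=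
    Finset.prod_ne_zero_iff.2 fun k _ => hfactor k
  have hhalf : ((n + 1 : ℕ) : ℝ) / 2 = (n : ℝ) / 2 + 1 / 2 := by push_cast; ring
  rw [ccoef, ccoef, Finset.prod_range_succ, hhalf, Real.rpow_add hq0]
  field_simp [hprod, hfactor n]

noncomputable def dressingExponent (τ s : ℝ) (n : ℕ) : ℝ :=
  (τ + 1) * (s - 1/2) ^ 2 / 2 + (τ⁻¹ + 1) * (s + n - 1/2) ^ 2 / 2

noncomputable def dressingWeight (q τ s : ℝ) (n : ℕ) : ℝ :=
  ccoef q n * q ^ dressingExponent τ s n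

theorem Wb0_eq_finsum {q : ℝ} (hq : 0 < q) (τ : ℝ) (f : ℝ → ℂ) (s : ℝ) :
    Wb0 q τ f s = ∑ᶠ n : ℕ, (dressingWeight q τ s n : ℂ) * f (s + n) := by
  rw [Wb0, mul_finsum]
  refine finsum_congr fun n => ?_
  rw [dressingWeight, dressingExponent, Real.rpow_add hq]
  push_cast
  ring

theorem add_dressingExponent_sub_div {τ : ℝ} (hτ0 : τ ≠ 0) (hτ1 : τ + 1 ≠ 0) (s : ℝ) (n : ℕ) :
    ((τ + 1) * s - τ - 1/2) + dressingExponent τ (s - τ / (τ + 1)) n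
      = dressingExponent τ s n - n := by
  unfold dressingExponent
  field_simp
  ring

theorem dressingExponent_add_inv {τ : ℝ} (hτ0 : τ ≠ 0) (hτ1 : τ + 1 ≠ 0) (s : ℝ) (n : ℕ) :
    dressingExponent τ (s + 1 / (τ + 1)) n
      = dressingExponent τ s (n + 1) + 1/2 - (n + 1 : ℕ) := by
  unfold dressingExponent
  push_cast
  field_simp
  ring

theorem rpow_mul_dressingWeight_sub_div {q τ : ℝ} (hq : 0 < q) (hτ0 : τ ≠ 0) (hτ1 : τ + 1 ≠ 0)
    (s : ℝ) (n : ℕ) :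
    q ^ ((τ + 1) * s - τ - 1/2) * dressingWeight q τ (s - τ / (τ + 1)) n
      = dressingWeight q τ s n / q ^ n := by
  rw [dressingWeight, mul_left_comm, ← Real.rpow_add hq, add_dressingExponent_sub_div hτ0 hτ1,
    Real.rpow_sub hq, Real.rpow_natCast, dressingWeight, mul_div_assoc]

theorem dressingWeight_add_inv {q τ : ℝ} (hq : 0 < q) (hτ0 : τ ≠ 0) (hτ1 : τ + 1 ≠ 0)
    (s : ℝ) (n : ℕ) :
    dressingWeight q τ (s + 1 / (τ + 1)) n
      = ccoef q n * q ^ (1/2 : ℝ) * q ^ dressingExponent τ s (n + 1) / q ^ (n + 1) := by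
  rw [dressingWeight, dressingExponent_add_inv hτ0 hτ1, Real.rpow_sub hq, Real.rpow_add hq,
    Real.rpow_natCast]
  ring

theorem dressingWeight_zero_eq_rpow_mul {q τ : ℝ} (hq : 0 < q) (hτ0 : τ ≠ 0)
    (hτ1 : τ + 1 ≠ 0) (s : ℝ) :
    dressingWeight q τ s 0
      = q ^ ((τ + 1) * s - τ - 1/2) * dressingWeight q τ (s - τ / (τ + 1)) 0 := by
  rw [rpow_mul_dressingWeight_sub_div hq hτ0 hτ1, pow_zero, div_one]

theorem dressingWeight_succ_eq_rpow_mul_sub {q τ : ℝ} (hq0 : 0 < q) (hq1 : q ≠ 1)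
    (hτ0 : τ ≠ 0) (hτ1 : τ + 1 ≠ 0) (s : ℝ) (n : ℕ) :
    dressingWeight q τ s (n + 1)
      = q ^ ((τ + 1) * s - τ - 1/2) * dressingWeight q τ (s - τ / (τ + 1)) (n + 1)
        - dressingWeight q τ (s + 1 / (τ + 1)) n := by
  rw [rpow_mul_dressingWeight_sub_div hq0 hτ0 hτ1, dressingWeight_add_inv hq0 hτ0 hτ1,
    ← ccoef_succ_mul hq0 hq1, dressingWeight]
  field_simp
  ring

/-- On `V₋` (functions with support bounded above),
`W̄₀ ∘ T_{−τ/(τ+1)} = (M_g ∘ T_{−τ/(τ+1)} − T_{1/(τ+1)}) ∘ W̄₀` with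
`g(s) = q^{(τ+1)s − τ − 1/2}`; i.e.
`−L̄₀^{−1/(τ⁻¹+1)} = −W̄₀ ∘ T_{−τ/(τ+1)} ∘ W̄₀^{−1} = (1 − q^{(τ+1)s − τ − 1/2} Λ^{−1}) Λ^{1/(τ+1)}`
(note `−1/(τ⁻¹+1) = −τ/(τ+1)`). -/
theorem Lbar0_fractional_power_formula (q τ : ℝ) (hq0 : 0 < q) (hq1 : q < 1)
    (hτ0 : τ ≠ 0) (hτ1 : τ ≠ -1)
    (f : ℝ → ℂ) (hf : BddAbove (Function.support f)) (s : ℝ) :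
    Wb0 q τ (fun t => f (t - τ / (τ + 1))) s
      = ((q ^ ((τ + 1) * s - τ - 1/2) : ℝ) : ℂ) * Wb0 q τ f (s - τ / (τ + 1)) -
          Wb0 q τ f (s + 1 / (τ + 1)) := by
  have hτ : τ + 1 ≠ 0 := fun h => hτ1 (eq_neg_of_add_eq_zero_left h)
  have hshift : ∀ n : ℕ, s + 1 / (τ + 1) + n = s - τ / (τ + 1) + (n + 1 : ℕ) := fun n => by
    push_cast; field_simp; ring
  simp only [Wb0_eq_finsum hq0, mul_finsum]
  refine finsum_nat_eq_sub_of_succ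
    (((hf.hasFiniteSupport_comp_add_natCast _).fun_mul_right _).fun_mul_right _)
    ((hf.hasFiniteSupport_comp_add_natCast _).fun_mul_right _) ?_ fun n => ?_
  · rw [dressingWeight_zero_eq_rpow_mul hq0 hτ0 hτ, Nat.cast_zero, add_zero, add_zero]
    push_cast
    ring
  · rw [hshift, add_sub_right_comm, dressingWeight_succ_eq_rpow_mul_sub hq0 hq1.ne hτ0 hτ]
    push_cast
    ring
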